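/- Let (a_n) be a real sequence and let c > 0 and d > 1 be real constants such that a_n is asymptotically equivalent to c · d^n · n^(−3/2) as n → ∞, and additionally a_n ≥ 1 for all n ≥ 1. Define b_n = ∑_{i=1}^{n} a_i. Then the sequence n ↦ b_{n+1} · (ln b_{n+1} + ln ln b_{n+1}) is asymptotically equivalent to c · (d/(d−1)) · d^(n+1) · (n+1)^(−1/2) · ln d as n → ∞. -/

import Mathlib

/-!
Write `h n = c dⁿ n^(-3/2)`. Since `h (n + 1) / h n → d > 1`, the error terms `d h i - h (i + 1)`
are `o(h i)` and telescope, so `∑_{i ≤ n} h i ~ d / (d - 1) · h n`; the partial sums of `a`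
are asymptotic to those of `h` because these diverge. For `B ~ φ → ∞` one has
`log B ~ log φ` and `log log B = o(log B)`, so `B (log B + log log B) ~ φ log φ`, and here
`log φ (n + 1) ~ (n + 1) log d`.
-/

open Filter Finset Real Asymptotics Topology

theorem Asymptotics.IsEquivalent.sum_range {u v : ℕ → ℝ} (huv : u ~[atTop] v) (hv : 0 ≤ v)
    (hv_sum : Tendsto (fun n => ∑ i ∈ range n, v i) atTop atTop) :
    (fun n => ∑ i ∈ range n, u i) ~[atTop] fun n => ∑ i ∈ range n, v i := by
  simpa only [IsEquivalent, Pi.sub_def, ← sum_sub_distrib] using huv.isLittleO.sum_range hv hv_sum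

theorem Asymptotics.IsEquivalent.mul_log_add_log_log {α : Type*} {l : Filter α} {u v : α → ℝ}
    (huv : u ~[l] v) (hv : Tendsto v l atTop) :
    (fun x => u x * (Real.log (u x) + Real.log (Real.log (u x)))) ~[l]
      fun x => v x * Real.log (v x) := by
  have hlog_u : Tendsto (fun x => Real.log (u x)) l atTop :=
    tendsto_log_atTop.comp (huv.symm.tendsto_atTop hv)
  have hloglog : (fun x => Real.log (Real.log (u x))) =o[l] fun x => Real.log (u x) :=
    isLittleO_log_id_atTop.comp_tendsto hlog_u
  exact huv.mul ((IsEquivalent.refl.add_isLittleO hloglog).trans (huv.log hv))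

section Ratio

variable {g : ℕ → ℝ} {q : ℝ}

theorem tendsto_sum_range_atTop_of_tendsto_ratio (hg : 0 ≤ g) (hq : 1 < q)
    (hratio : Tendsto (fun n => g (n + 1) / g n) atTop (𝓝 q)) :
    Tendsto (fun n => ∑ i ∈ range n, g i) atTop atTop := by
  refine (not_summable_iff_tendsto_nat_atTop_of_nonneg hg).1
    (not_summable_of_ratio_test_tendsto_gt_one hq ?_)
  simpa only [Real.norm_of_nonneg (hg _)] using hratio

theorem isEquivalent_succ_of_tendsto_ratio (hq : q ≠ 0)
    (hratio : Tendsto (fun n => g (n + 1) / g n) atTop (𝓝 q)) :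
    (fun n => g (n + 1)) ~[atTop] fun n => q * g n := by
  have hg : ∀ᶠ n in atTop, g n ≠ 0 :=
    (hratio.eventually_ne hq).mono fun n h hgn => h (by simp [hgn])
  refine (isEquivalent_iff_tendsto_one (hg.mono fun n hn => mul_ne_zero hq hn)).2 ?_
  simpa [Pi.div_def, div_mul_eq_div_div_swap, hq] using hratio.div_const q

theorem isEquivalent_sum_range_succ_of_tendsto_ratio (hg : 0 ≤ g) (hq : 1 < q)
    (hratio : Tendsto (fun n => g (n + 1) / g n) atTop (𝓝 q)) :
    (fun n => ∑ i ∈ range (n + 1), g i) ~[atTop] fun n => q / (q - 1) * g n := by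
  set S := fun n => ∑ i ∈ range (n + 1), g i
  have hT_top := tendsto_sum_range_atTop_of_tendsto_ratio hg hq hratio
  have hS_top : Tendsto S atTop atTop := hT_top.comp (tendsto_add_atTop_nat 1)
  have he : (fun n => q * g n - g (n + 1)) =o[atTop] g := by
    simpa only [Pi.sub_apply, neg_sub] using (isEquivalent_succ_of_tendsto_ratio (by linarith)
      hratio).isLittleO.neg_left.trans_isBigO (isBigO_const_mul_self q g atTop)
  have hT_le_S : (fun n => ∑ i ∈ range n, g i) =O[atTop] S :=
    IsBigO.of_bound 1 (Eventually.of_forall fun n => by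
      rw [one_mul, Real.norm_of_nonneg (sum_nonneg fun i _ => hg i),
        Real.norm_of_nonneg (sum_nonneg fun i _ => hg i)]
      exact sum_le_sum_of_subset_of_nonneg (range_subset_range.2 n.le_succ) fun i _ _ => hg i)
  have htelescope (n : ℕ) :
      (q - 1) * S n - q * g n = ∑ i ∈ range n, (q * g i - g (i + 1)) - g 0 := by
    rw [sum_sub_distrib, ← mul_sum]
    linear_combination q * sum_range_succ g n - sum_range_succ' g n
  have hsmall : (fun n => (q - 1) * S n - q * g n) =o[atTop] S := by
    simp only [htelescope]
    exact ((he.sum_range hg hT_top).trans_isBigO hT_le_S).sub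
      (isLittleO_const_left.2 (Or.inr (tendsto_norm_atTop_atTop.comp hS_top)))
  refine IsEquivalent.symm ?_
  refine (hsmall.const_mul_left (-(q - 1)⁻¹)).congr_left fun n => ?_
  have : q - 1 ≠ 0 := by linarith
  simp only [Pi.sub_apply]
  field_simp
  ring

theorem Asymptotics.IsEquivalent.sum_range_succ_of_tendsto_ratio {u : ℕ → ℝ} (hug : u ~[atTop] g)
    (hg : 0 ≤ g) (hq : 1 < q) (hratio : Tendsto (fun n => g (n + 1) / g n) atTop (𝓝 q)) :
    (fun n => ∑ i ∈ range (n + 1), u i) ~[atTop] fun n => q / (q - 1) * g n :=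
  ((hug.sum_range hg (tendsto_sum_range_atTop_of_tendsto_ratio hg hq hratio)).comp_tendsto
    (tendsto_add_atTop_nat 1)).trans (isEquivalent_sum_range_succ_of_tendsto_ratio hg hq hratio)

end Ratio

theorem tendsto_mul_pow_mul_rpow_succ_div {c d : ℝ} (hc : c ≠ 0) (hd : d ≠ 0) (s : ℝ) :
    Tendsto (fun n : ℕ => c * d ^ (n + 1) * ((n + 1 : ℕ) : ℝ) ^ s / (c * d ^ n * (n : ℝ) ^ s))
      atTop (𝓝 d) := by
  have hlim : Tendsto (fun n : ℕ => d * ((n : ℝ) / (n + 1)) ^ (-s)) atTop (𝓝 d) := by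
    simpa using ((tendsto_natCast_div_add_atTop (1 : ℝ)).rpow_const (p := -s)
      (Or.inl one_ne_zero)).const_mul d
  refine hlim.congr' ?_
  filter_upwards [eventually_gt_atTop 0] with n hn
  have hn : (0 : ℝ) < n := by exact_mod_cast hn
  rw [div_rpow hn.le (by positivity), rpow_neg hn.le, rpow_neg (by positivity)]
  push_cast
  field_simp
  ring

theorem isEquivalent_log_mul_pow_mul_rpow {c d : ℝ} (hc : c ≠ 0) (hd : 0 < d) (hd1 : d ≠ 1)
    (s : ℝ) : (fun n : ℕ => log (c * d ^ n * (n : ℝ) ^ s)) ~[atTop] fun n => n * log d := by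
  have hexpand : (fun n : ℕ => n * log d + (log c + s * log n)) =ᶠ[atTop]
      fun n : ℕ => log (c * d ^ n * (n : ℝ) ^ s) := by
    filter_upwards [eventually_gt_atTop 0] with n hn
    have hn : (0 : ℝ) < n := by exact_mod_cast hn
    rw [log_mul (by positivity) (by positivity), log_mul hc (by positivity), log_pow,
      log_rpow hn]
    ring
  have hn : Tendsto (fun n : ℕ => (n : ℝ)) atTop atTop := tendsto_natCast_atTop_atTop
  have hrest : (fun n : ℕ => log c + s * log n) =o[atTop] fun n : ℕ => (n : ℝ) * log d := by
    refine ((isLittleO_const_left.2 (Or.inr (tendsto_norm_atTop_atTop.comp hn))).add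
      ((isLittleO_log_id_atTop.comp_tendsto hn).const_mul_left s)).trans_isBigO ?_
    simpa only [Function.comp_def, id, mul_comm] using
      isBigO_self_const_mul (log_ne_zero_of_pos_of_ne_one hd hd1) (fun n : ℕ => (n : ℝ)) atTop
  exact (IsEquivalent.refl.add_isLittleO hrest).congr_left hexpand

theorem b_mul_log_isEquivalent_general
    (a : ℕ → ℝ) (c d : ℝ) (hc : 0 < c) (hd : 1 < d)
    (ha : Asymptotics.IsEquivalent atTop a
      (fun n => c * d ^ n * (n : ℝ) ^ (-(3 / 2 : ℝ))))
    (b : ℕ → ℝ) (hb : ∀ n, b n = ∑ i ∈ Finset.Icc 1 n, a i) :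
    Asymptotics.IsEquivalent atTop
      (fun n => b (n + 1) * (Real.log (b (n + 1)) + Real.log (Real.log (b (n + 1)))))
      (fun n => c * (d / (d - 1)) * d ^ (n + 1) * ((n : ℝ) + 1) ^ (-(1 / 2 : ℝ)) * Real.log d) := by
  set h : ℕ → ℝ := fun n => c * d ^ n * (n : ℝ) ^ (-(3 / 2 : ℝ)) with h_def
  have hd0 : 0 < d := by linarith
  have hb_succ : (fun n => b (n + 1)) = fun n => ∑ i ∈ range (n + 1), a (i + 1) := by
    funext n
    rw [hb, ← Ico_add_one_right_eq_Icc, sum_Ico_eq_sum_range]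
    simp only [add_tsub_cancel_right, add_comm 1]
  have h_nonneg : 0 ≤ fun n => h (n + 1) := fun n => by positivity
  have h_ratio : Tendsto (fun n => h (n + 1 + 1) / h (n + 1)) atTop (𝓝 d) :=
    (tendsto_mul_pow_mul_rpow_succ_div hc.ne' hd0.ne' _).comp (tendsto_add_atTop_nat 1)
  have hB : (fun n => b (n + 1)) ~[atTop] fun n => d / (d - 1) * h (n + 1) := by
    rw [hb_succ]
    exact (ha.comp_tendsto (tendsto_add_atTop_nat 1)).sum_range_succ_of_tendsto_ratio
      h_nonneg hd h_ratio
  have hB_top : Tendsto (fun n => d / (d - 1) * h (n + 1)) atTop atTop :=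
    (isEquivalent_sum_range_succ_of_tendsto_ratio h_nonneg hd h_ratio).tendsto_atTop
      ((tendsto_sum_range_atTop_of_tendsto_ratio h_nonneg hd h_ratio).comp
        (tendsto_add_atTop_nat 1))
  have hlog : (fun n => log (d / (d - 1) * h (n + 1))) ~[atTop]
      fun n => ((n + 1 : ℕ) : ℝ) * log d := by
    refine ((isEquivalent_log_mul_pow_mul_rpow (c := d / (d - 1) * c) (by positivity) hd0 hd.ne'
      (-(3 / 2 : ℝ))).comp_tendsto (tendsto_add_atTop_nat 1)).congr_left
      (Eventually.of_forall fun n => ?_)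
    simp only [h_def, Function.comp_apply, mul_assoc]
  refine ((hB.mul_log_add_log_log hB_top).trans (IsEquivalent.refl.mul hlog)).congr_right
    (Eventually.of_forall fun n => ?_)
  have hn : (0 : ℝ) < n + 1 := by positivity
  have hrpow : ((n : ℝ) + 1) ^ (-(1 / 2 : ℝ)) = ((n : ℝ) + 1) ^ (-(3 / 2 : ℝ)) * (n + 1) := by
    rw [← rpow_add_one hn.ne']
    norm_num
  simp only [Pi.mul_apply, h_def, hrpow]
  push_cast
  ring

theorem b_mul_log_isEquivalent
    (a : ℕ → ℝ) (c d : ℝ) (hc : 0 < c) (hd : 1 < d)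
    (ha : Asymptotics.IsEquivalent atTop a
      (fun n => c * d ^ n * (n : ℝ) ^ (-(3 / 2 : ℝ))))
    (ha1 : ∀ n ≥ 1, 1 ≤ a n)
    (b : ℕ → ℝ) (hb : ∀ n, b n = ∑ i ∈ Finset.Icc 1 n, a i) :
    Asymptotics.IsEquivalent atTop
      (fun n => b (n + 1) * (Real.log (b (n + 1)) + Real.log (Real.log (b (n + 1)))))
      (fun n => c * (d / (d - 1)) * d ^ (n + 1) * ((n : ℝ) + 1) ^ (-(1 / 2 : ℝ)) * Real.log d) :=
  b_mul_log_isEquivalent_general a c d hc hd ha b hb
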